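/- Let S be H-small with constants a ∈ [0,1), b ∈ ℝ, let A ∈ 𝔅(𝔥_s,𝔉) for some s ∈ (0,1), and let λ < λ_inf be such that 1−G_λ and 1−G_λ* have bounded inverses in 𝔅(𝔉). Define S̃ := (1−G_λ*)^{-1}(A(G − G_λ) + T_S)(1−G_λ)^{-1}. Then S̃ − S extends to a bounded operator on 𝔉; in particular S̃ is H-small with the same constant a: ‖S̃ψ‖ ≤ a‖Hψ‖ + b̃‖ψ‖ for all ψ ∈ dom(H), where b̃ := b + ‖S̃−S‖_{𝔅(𝔉)}. -/

import Mathlib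

open scoped InnerProductSpace ComplexConjugate

noncomputable section

local notation "⟪" x ", " y "⟫" => @inner ℂ _ _ x y

/-- Abstract context for the paper "On the resolvent of H+A*+A":
`F` is the Hilbert space `𝔉`, `H1` is the space `𝔥₁ = dom(H)` endowed with the graph
norm, `Hm1` is the dual space `𝔥₋₁`.  `j1 : 𝔥₁ ↪ 𝔉` and `jm : 𝔉 ↪ 𝔥₋₁` are the dense
inclusions, `Hop` is `H` viewed as a bounded operator `𝔥₁ → 𝔉`, `Hbar` is its closure
`H̄ : 𝔉 → 𝔥₋₁`, `lamInf = inf σ(H)`, `res = ρ(H)`, `RF z = (-H+z)⁻¹ : 𝔉 → 𝔥₁`,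
`RM z` is its extension `𝔥₋₁ → 𝔉`, `pair` is the duality pairing between `𝔥₋₁` and `𝔥₁`
(conjugate-linear in the first variable) extending the scalar product of `𝔉`,
`ns s` is the scale norm `‖ψ‖_s = ‖(H²+1)^{s/2}ψ‖` on `𝔥₁` (`0 ≤ s ≤ 1`),
`A ∈ 𝔅(𝔥₁,𝔉)` and `Astar : 𝔉 → 𝔥₋₁` is its dual-pairing adjoint. -/
structure Ctx (F H1 Hm1 : Type*)
    [NormedAddCommGroup F] [InnerProductSpace ℂ F] [CompleteSpace F]
    [NormedAddCommGroup H1] [InnerProductSpace ℂ H1] [CompleteSpace H1]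
    [NormedAddCommGroup Hm1] [InnerProductSpace ℂ Hm1] [CompleteSpace Hm1] where
  j1 : H1 →L[ℂ] F
  jm : F →L[ℂ] Hm1
  Hop : H1 →L[ℂ] F
  Hbar : F →L[ℂ] Hm1
  lamInf : ℝ
  res : Set ℂ
  RF : ℂ → (F →L[ℂ] H1)
  RM : ℂ → (Hm1 →L[ℂ] F)
  pair : Hm1 → H1 → ℂ
  ns : ℝ → H1 → ℝ
  A : H1 →L[ℂ] F
  Astar : F →L[ℂ] Hm1
  j1_inj : Function.Injective j1
  j1_dense : DenseRange j1
  jm_inj : Function.Injective jm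
  jm_dense : DenseRange jm
  /-- the norm of `𝔥₁` is the graph norm of `H` -/
  norm1_sq : ∀ ψ : H1, ‖ψ‖ ^ 2 = ‖j1 ψ‖ ^ 2 + ‖Hop ψ‖ ^ 2
  /-- `H` is symmetric -/
  Hsymm : ∀ ψ φ : H1, ⟪j1 ψ, Hop φ⟫ = ⟪Hop ψ, j1 φ⟫
  /-- `H` is self-adjoint: non-real points belong to `ρ(H)` -/
  res_nonreal : ∀ z : ℂ, z.im ≠ 0 → z ∈ res
  /-- `H` is bounded from below by `lamInf` -/
  res_below : ∀ x : ℝ, x < lamInf → (x : ℂ) ∈ res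
  /-- `lamInf` is exactly `inf σ(H)` -/
  lamInf_not_res : (lamInf : ℂ) ∉ res
  RF_inv_left : ∀ z ∈ res, (RF z).comp (z • j1 - Hop) = ContinuousLinearMap.id ℂ H1
  RF_inv_right : ∀ z ∈ res, (z • j1 - Hop).comp (RF z) = ContinuousLinearMap.id ℂ F
  /-- `H̄` extends `H` -/
  Hbar_ext : Hbar.comp j1 = jm.comp Hop
  /-- `RM z` extends `RF z` -/
  RM_ext : ∀ z ∈ res, (RM z).comp jm = j1.comp (RF z)
  RM_inv_left : ∀ z ∈ res, (RM z).comp (z • jm - Hbar) = ContinuousLinearMap.id ℂ F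
  RM_inv_right : ∀ z ∈ res, (z • jm - Hbar).comp (RM z) = ContinuousLinearMap.id ℂ Hm1
  pair_add : ∀ x y φ, pair (x + y) φ = pair x φ + pair y φ
  pair_smul : ∀ (a : ℂ) x φ, pair (a • x) φ = starRingEnd ℂ a * pair x φ
  pair_addr : ∀ x φ₁ φ₂, pair x (φ₁ + φ₂) = pair x φ₁ + pair x φ₂
  pair_smulr : ∀ (a : ℂ) x φ, pair x (a • φ) = a * pair x φ
  pair_cont : ∀ φ, Continuous fun x => pair x φ
  /-- the pairing extends the scalar product of `𝔉` -/
  pair_jm : ∀ (ψ : F) (φ : H1), pair (jm ψ) φ = ⟪ψ, j1 φ⟫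
  pair_nondeg : ∀ x, (∀ φ, pair x φ = 0) → x = 0
  ns_zero : ∀ ψ, ns 0 ψ = ‖j1 ψ‖
  ns_one : ∀ ψ, ns 1 ψ = ‖ψ‖
  ns_nonneg : ∀ s ψ, 0 ≤ ns s ψ
  ns_mono : ∀ s t : ℝ, 0 ≤ s → s ≤ t → t ≤ 1 → ∀ ψ, ns s ψ ≤ ns t ψ
  /-- interpolation property of the scale of Hilbert spaces -/
  ns_interp : ∀ s : ℝ, 0 ≤ s → s ≤ 1 → ∀ ψ, ns s ψ ≤ ‖ψ‖ ^ s * ‖j1 ψ‖ ^ (1 - s)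
  /-- `Astar` is the dual-pairing adjoint of `A` -/
  Astar_spec : ∀ (ψ : F) (φ : H1), pair (Astar ψ) φ = ⟪ψ, A φ⟫

variable {F H1 Hm1 : Type*}
  [NormedAddCommGroup F] [InnerProductSpace ℂ F] [CompleteSpace F]
  [NormedAddCommGroup H1] [InnerProductSpace ℂ H1] [CompleteSpace H1]
  [NormedAddCommGroup Hm1] [InnerProductSpace ℂ Hm1] [CompleteSpace Hm1]

namespace Ctx

variable (c : Ctx F H1 Hm1)

/-- `G_z := (A R_{z̄})* ∈ 𝔅(𝔉)`. -/
def G (z : ℂ) : F →L[ℂ] F :=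
  ContinuousLinearMap.adjoint (c.A.comp (c.RF (starRingEnd ℂ z)))

/-- `G_z* ∈ 𝔅(𝔉)`, for `z` real this is `G*`. -/
def Gst (lam : ℝ) : F →L[ℂ] F :=
  ContinuousLinearMap.adjoint (c.G (lam : ℂ))

/-- `𝔸 : 𝔥₁ → 𝔉⊕𝔥₁`, `𝔸ψ = Aψ ⊕ ψ`. -/
def Ab : H1 →L[ℂ] (F × H1) :=
  c.A.prod (ContinuousLinearMap.id ℂ H1)

/-- `𝔾_z : 𝔉⊕𝔥₋₁ → 𝔉`, `𝔾_z(ψ⊕φ) = G_zψ + R_zφ`. -/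
def Gb (z : ℂ) : (F × Hm1) →L[ℂ] F :=
  (c.G z).comp (ContinuousLinearMap.fst ℂ F Hm1) +
    (c.RM z).comp (ContinuousLinearMap.snd ℂ F Hm1)

/-- `𝔾_{z̄}* : 𝔉 → 𝔉⊕𝔥₁`, `ψ ↦ (A R_z ψ) ⊕ (R_z ψ)`. -/
def Gbstar (z : ℂ) : F →L[ℂ] (F × H1) :=
  (c.A.comp (c.RF z)).prod (c.RF z)

/-- `M_z = 𝔸(𝔾 - 𝔾_z) = (z-λ∘) 𝔾* 𝔾_z : 𝔉⊕𝔥₋₁ → 𝔉⊕𝔥₁`. -/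
def M (lam : ℝ) (z : ℂ) : (F × Hm1) →L[ℂ] (F × H1) :=
  (z - (lam : ℂ)) • ((c.Gbstar (lam : ℂ)).comp (c.Gb z))

/-- `M' : 𝔉⊕𝔥₋₁ → 𝔉⊕𝔥₁` is a realization of `M_z := 𝔸(𝔾 - 𝔾_z)`, i.e. the second
component of `M' x` is the lift to `𝔥₁` of `(𝔾 - 𝔾_z)x` and the first component is `A`
applied to it. -/
def IsMLift (lam : ℝ) (z : ℂ) (M' : (F × Hm1) →L[ℂ] (F × H1)) : Prop :=
  ∀ x : F × Hm1,
    c.j1 ((M' x).2) = c.Gb (lam : ℂ) x - c.Gb z x ∧ (M' x).1 = c.A ((M' x).2)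

/-- The domain `𝔇 = {ψ ∈ 𝔉 : ψ - Gψ ∈ 𝔥₁}` (with `G = G_{λ∘}`). -/
def Dom (lam : ℝ) : Set F :=
  {ψ | ∃ φ : H1, ψ - c.G (lam : ℂ) ψ = c.j1 φ}

/-- The action of the block operator matrix `Θ_S = [[T_S, 1-G*],[1-G, -R]]` on the element
`ψ ⊕ φ` of its domain `𝔇⊕𝔉`; here `ψ0 ∈ 𝔥₁` is the lift of `(1-G)ψ`, so that
`T_Sψ = (1-G*)S(1-G)ψ = (1-G*)(Sψ0)`. -/
def ThetaS (lam : ℝ) (S : H1 →ₗ[ℂ] F) (ψ : F) (ψ0 : H1) (φ : F) : F × H1 :=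
  (S ψ0 - c.Gst lam (S ψ0) + φ - c.Gst lam φ, ψ0 - c.RF (lam : ℂ) φ)

/-- The action of `Θ_S + M_z` on `ψ ⊕ φ ∈ 𝔇⊕𝔉`. -/
def ThetaMS (lam : ℝ) (S : H1 →ₗ[ℂ] F) (z : ℂ) (ψ : F) (ψ0 : H1) (φ : F) : F × H1 :=
  c.ThetaS lam S ψ ψ0 φ + c.M lam z (ψ, c.jm φ)

/-- `Λ ∈ 𝔅(𝔉⊕𝔥₁, 𝔉⊕𝔥₋₁)` is the (two-sided) inverse of `Θ_S + M_z`. -/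
def IsInvTheta (lam : ℝ) (S : H1 →ₗ[ℂ] F) (z : ℂ)
    (Λ : (F × H1) →L[ℂ] (F × Hm1)) : Prop :=
  (∀ (ψ : F) (ψ0 : H1) (φ : F), c.j1 ψ0 = ψ - c.G (lam : ℂ) ψ →
    Λ (c.ThetaMS lam S z ψ ψ0 φ) = (ψ, c.jm φ)) ∧
  (∀ y : F × H1, ∃ (ψ : F) (ψ0 : H1) (φ : F),
    c.j1 ψ0 = ψ - c.G (lam : ℂ) ψ ∧ Λ y = (ψ, c.jm φ) ∧ c.ThetaMS lam S z ψ ψ0 φ = y)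

/-- `Z_S := {z ∈ ρ(H) : (Θ_S + M_z)⁻¹ ∈ 𝔅(𝔉⊕𝔥₁, 𝔉⊕𝔥₋₁)}`. -/
def ZS (lam : ℝ) (S : H1 →ₗ[ℂ] F) : Set ℂ :=
  {z | z ∈ c.res ∧ ∃ Λ : (F × H1) →L[ℂ] (F × Hm1), c.IsInvTheta lam S z Λ}

/-- `R̂_z = R_z + 𝔾_z Λ 𝔾_{z̄}* : 𝔉 → 𝔉`. -/
def Rhat (z : ℂ) (Λ : (F × H1) →L[ℂ] (F × Hm1)) : F →L[ℂ] F :=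
  c.j1.comp (c.RF z) + (c.Gb z).comp (Λ.comp (c.Gbstar z))

/-- The duality pairing `⟨⟨·,·⟩⟩_{-1,1}` between `𝔉⊕𝔥₋₁` and `𝔉⊕𝔥₁`. -/
def pairX (x : F × Hm1) (y : F × H1) : ℂ :=
  ⟪x.1, y.1⟫ + c.pair x.2 y.2

/-- Assumption (H3): `ran(G_z) ∩ 𝔥₁ = {0}` for all `z ∈ ρ(H)`. -/
def H3 : Prop :=
  ∀ z ∈ c.res, ∀ (ψ : F) (φ : H1), c.G z ψ = c.j1 φ → c.G z ψ = 0

/-- `S` is a symmetric operator (with domain containing `𝔥₁`). -/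
def IsSymmOp (S : H1 →ₗ[ℂ] F) : Prop :=
  ∀ ψ φ : H1, ⟪S ψ, c.j1 φ⟫ = ⟪c.j1 ψ, S φ⟫

/-- `S` is `H`-small with constants `a`, `b`. -/
def HSmall (S : H1 →ₗ[ℂ] F) (a b : ℝ) : Prop :=
  ∀ ψ : H1, ‖S ψ‖ ≤ a * ‖c.Hop ψ‖ + b * ‖c.j1 ψ‖

/-- `HSf ψ ψ0` realizes the action of `H_S = H̄ + A* + A_S` on `ψ ∈ 𝔇` (with `ψ0` the lift
of `(1-G)ψ`): `H_Sψ ∈ 𝔉` is characterized by `H_Sψ = H̄ψ + A*ψ + Aψ0 - T_Sψ` in `𝔥₋₁`. -/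
def IsHSAction (lam : ℝ) (S : H1 →ₗ[ℂ] F) (HSf : F → H1 → F) : Prop :=
  ∀ (ψ : F) (ψ0 : H1), c.j1 ψ0 = ψ - c.G (lam : ℂ) ψ →
    c.jm (HSf ψ ψ0) =
      c.Hbar ψ + c.Astar ψ + c.jm (c.A ψ0 - (S ψ0 - c.Gst lam (S ψ0)))

/-- `Rop = (-(H+W)+z)⁻¹`, the resolvent at `z` of the perturbation of `H` by the
`H`-bounded operator `W` (with domain `𝔥₁`). -/
def IsResolventOf (W : H1 →L[ℂ] F) (z : ℂ) (Rop : F →L[ℂ] F) : Prop :=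
  (∀ ψ : H1, Rop (z • c.j1 ψ - (c.Hop ψ + W ψ)) = c.j1 ψ) ∧
  (∀ χ : F, ∃ ψ : H1, Rop χ = c.j1 ψ ∧ z • c.j1 ψ - (c.Hop ψ + W ψ) = χ)

/-- `Rop = (-H_S+z)⁻¹`, the resolvent at `z` of the operator `H_S` with domain `𝔇` whose
action is realized by `HSf`. -/
def IsResolventOfD (lam : ℝ) (HSf : F → H1 → F) (z : ℂ) (Rop : F →L[ℂ] F) : Prop :=
  (∀ (ψ : F) (ψ0 : H1), c.j1 ψ0 = ψ - c.G (lam : ℂ) ψ →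
    Rop (z • ψ - HSf ψ ψ0) = ψ) ∧
  (∀ χ : F, ∃ (ψ : F) (ψ0 : H1),
    c.j1 ψ0 = ψ - c.G (lam : ℂ) ψ ∧ Rop χ = ψ ∧ z • ψ - HSf ψ ψ0 = χ)

/-- `ψ ∈ 𝔥_s` (for `0 ≤ s ≤ 1`), i.e. `ψ ∈ 𝔉` is the limit of a `‖·‖_s`-Cauchy sequence
of elements of `𝔥₁`. -/
def memHs (s : ℝ) (ψ : F) : Prop :=
  ∃ u : ℕ → H1, Filter.Tendsto (fun n => c.j1 (u n)) Filter.atTop (nhds ψ) ∧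
    ∀ ε > 0, ∃ N, ∀ m ≥ N, ∀ n ≥ N, c.ns s (u m - u n) < ε

/-- `T ∈ 𝔅(𝔥_s, 𝔉)` (with `T` given on `𝔥₁`): `T` is bounded for the `‖·‖_s`-norm. -/
def MemBs (s : ℝ) (T : H1 →L[ℂ] F) : Prop :=
  ∃ C : ℝ, 0 ≤ C ∧ ∀ ψ : H1, ‖T ψ‖ ≤ C * c.ns s ψ

/-- `T` (with domain containing `𝔥₁ ⊆ 𝔥_{1/2}`) is closable as an operator in `𝔉`. -/
def ClosableOp (T : H1 →L[ℂ] F) : Prop :=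
  ∀ (u : ℕ → H1) (χ : F),
    Filter.Tendsto (fun n => c.j1 (u n)) Filter.atTop (nhds 0) →
    Filter.Tendsto (fun n => T (u n)) Filter.atTop (nhds χ) → χ = 0

/-- `Tstar` is (the restriction to `𝔥₁` of) the adjoint of `T`. -/
def IsAdjointOn (T Tstar : H1 →L[ℂ] F) : Prop :=
  ∀ ψ φ : H1, ⟪Tstar ψ, c.j1 φ⟫ = ⟪c.j1 ψ, T φ⟫

/-- `G_{n,z} := (A_n R_{z̄})* ∈ 𝔅(𝔉)`. -/
def Gn (An : H1 →L[ℂ] F) (z : ℂ) : F →L[ℂ] F :=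
  ContinuousLinearMap.adjoint (An.comp (c.RF (starRingEnd ℂ z)))

/-- `B = A_n R A_n* ∈ 𝔅(𝔉)`: since `R A_n*ψ = G_{n,λ∘}ψ ∈ 𝔥₁`, the operator `B` is
`A_n` applied to the lift of `G_{n,λ∘}ψ`. -/
def IsAnRAn (lam : ℝ) (An : H1 →L[ℂ] F) (B : F →L[ℂ] F) : Prop :=
  ∀ ψ : F, ∃ φ : H1, c.j1 φ = c.Gn An (lam : ℂ) ψ ∧ B ψ = An φ

/-- `𝔾_{n,z}` as a bounded operator `𝔉⊕𝔉 → 𝔉`, `ψ⊕φ ↦ G_{n,z}ψ + R_zφ`. -/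
def Gnb (An : H1 →L[ℂ] F) (z : ℂ) : (F × F) →L[ℂ] F :=
  (c.Gn An z).comp (ContinuousLinearMap.fst ℂ F F) +
    (c.j1.comp (c.RF z)).comp (ContinuousLinearMap.snd ℂ F F)

/-- `𝔾_{n,z̄}* : 𝔉 → 𝔉⊕𝔉`, `ψ ↦ (A_n R_z ψ) ⊕ (R_z ψ)`. -/
def Gnbstar (An : H1 →L[ℂ] F) (z : ℂ) : F →L[ℂ] (F × F) :=
  (An.comp (c.RF z)).prod (c.j1.comp (c.RF z))

/-- `M_{n,z} = 𝔸_n(𝔾_n - 𝔾_{n,z}) = (z-λ∘)𝔾_n*𝔾_{n,z} : 𝔉⊕𝔉 → 𝔉⊕𝔥₁ ⊆ 𝔉⊕𝔉`. -/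
def Mn (lam : ℝ) (An : H1 →L[ℂ] F) (z : ℂ) : (F × F) →L[ℂ] (F × F) :=
  (z - (lam : ℂ)) • ((c.Gnbstar An (lam : ℂ)).comp (c.Gnb An z))

/-- `Θ_n = [[E_n - A_nRA_n*, 1-G_n*],[1-G_n, -R]] : 𝔉⊕𝔉 → 𝔉⊕𝔉`. -/
def Thetan (lam : ℝ) (An : H1 →L[ℂ] F) (En AnRAn : F →L[ℂ] F) :
    (F × F) →L[ℂ] (F × F) :=
  ((En - AnRAn).comp (ContinuousLinearMap.fst ℂ F F) +
      ((1 : F →L[ℂ] F) - An.comp (c.RF (lam : ℂ))).comp (ContinuousLinearMap.snd ℂ F F)).prod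
    (((1 : F →L[ℂ] F) - c.Gn An (lam : ℂ)).comp (ContinuousLinearMap.fst ℂ F F) -
      (c.j1.comp (c.RF (lam : ℂ))).comp (ContinuousLinearMap.snd ℂ F F))

end Ctx

/-!
Put `u := (1 - G_λ)⁻¹ψ`. Then `ξ := (G - G_λ)u = (λ - λ∘) R_λ G u` lies in `𝔥₁` with
`‖ξ‖_{𝔥₁} ≲ ‖ψ‖`, and `(1 - G)u = ψ - ξ`. Writing `Sψ = (1 - G_λ*)⁻¹(1 - G_λ*)Sψ` gives
`S̃ψ - Sψ = (1 - G_λ*)⁻¹((A - S + G*S)ξ + (G_λ* - G*)Sψ)`. The first term is bounded by `‖ξ‖_{𝔥₁}`.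
The second is `(λ∘ - λ) A R_λ (R S ψ)`, and `R S` is bounded on `𝔉` because `S` is symmetric:
`‖RSψ‖² = ⟨ψ, S R (RSψ)⟩ ≤ ‖ψ‖ ‖S R‖ ‖RSψ‖`.
-/

namespace Ctx

variable (c : Ctx F H1 Hm1)

lemma norm_j1_le (φ : H1) : ‖c.j1 φ‖ ≤ ‖φ‖ := by
  have := c.norm1_sq φ
  nlinarith [norm_nonneg (c.j1 φ), norm_nonneg φ, sq_nonneg ‖c.Hop φ‖]

lemma norm_Hop_le (φ : H1) : ‖c.Hop φ‖ ≤ ‖φ‖ := by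
  have := c.norm1_sq φ
  nlinarith [norm_nonneg (c.Hop φ), norm_nonneg φ, sq_nonneg ‖c.j1 φ‖]

variable {c} in
lemma HSmall.norm_apply_le {S : H1 →ₗ[ℂ] F} {a b : ℝ} (h : c.HSmall S a b) (φ : H1) :
    ‖S φ‖ ≤ (|a| + |b|) * ‖φ‖ :=
  calc ‖S φ‖ ≤ a * ‖c.Hop φ‖ + b * ‖c.j1 φ‖ := h φ
    _ ≤ |a| * ‖φ‖ + |b| * ‖φ‖ := by
      gcongr ?_ + ?_
      · exact (mul_le_mul_of_nonneg_right (le_abs_self a) (norm_nonneg _)).trans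
          (mul_le_mul_of_nonneg_left (c.norm_Hop_le φ) (abs_nonneg a))
      · exact (mul_le_mul_of_nonneg_right (le_abs_self b) (norm_nonneg _)).trans
          (mul_le_mul_of_nonneg_left (c.norm_j1_le φ) (abs_nonneg b))
    _ = (|a| + |b|) * ‖φ‖ := by ring

lemma smul_j1_RF_sub_Hop_RF {z : ℂ} (hz : z ∈ c.res) (χ : F) :
    z • c.j1 (c.RF z χ) - c.Hop (c.RF z χ) = χ := by
  simpa using congr($(c.RF_inv_right z hz) χ)

lemma RF_smul_j1_sub_Hop {z : ℂ} (hz : z ∈ c.res) (φ : H1) :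
    c.RF z (z • c.j1 φ - c.Hop φ) = φ := by
  simpa using congr($(c.RF_inv_left z hz) φ)

lemma RF_sub_RF {z w : ℂ} (hz : z ∈ c.res) (hw : w ∈ c.res) (χ : F) :
    c.RF z χ - c.RF w χ = (w - z) • c.RF z (c.j1 (c.RF w χ)) := by
  set φ := c.RF w χ
  calc c.RF z χ - φ
      = c.RF z (w • c.j1 φ - c.Hop φ) - c.RF z (z • c.j1 φ - c.Hop φ) := by
        rw [c.smul_j1_RF_sub_Hop_RF hw, c.RF_smul_j1_sub_Hop hz]
    _ = (w - z) • c.RF z (c.j1 φ) := by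
        rw [← map_sub, sub_sub_sub_cancel_right, ← sub_smul, map_smul]

lemma inner_j1_RF_left {t : ℝ} (ht : (t : ℂ) ∈ c.res) (x y : F) :
    ⟪c.j1 (c.RF t x), y⟫ = ⟪x, c.j1 (c.RF t y)⟫ := by
  conv_lhs => rw [← c.smul_j1_RF_sub_Hop_RF ht y]
  conv_rhs => rw [← c.smul_j1_RF_sub_Hop_RF ht x]
  rw [inner_sub_right, inner_smul_right, inner_sub_left, inner_smul_left, Complex.conj_ofReal,
    c.Hsymm]

lemma inner_G_left (t : ℝ) (x y : F) : ⟪c.G t x, y⟫ = ⟪x, c.A (c.RF t y)⟫ := by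
  simp [G, ContinuousLinearMap.adjoint_inner_left]

lemma Gst_apply (t : ℝ) (x : F) : c.Gst t x = c.A (c.RF t x) := by
  simp [Gst, G]

lemma G_sub_G_apply {t₀ t : ℝ} (ht₀ : (t₀ : ℂ) ∈ c.res) (ht : (t : ℂ) ∈ c.res) (x : F) :
    c.G t₀ x - c.G t x = ((t : ℂ) - t₀) • c.j1 (c.RF t (c.G t₀ x)) := by
  refine ext_inner_right ℂ fun y => ?_
  have hconj : conj ((t : ℂ) - t₀) = (t : ℂ) - t₀ := by simp
  rw [inner_sub_left, c.inner_G_left, c.inner_G_left, inner_smul_left, hconj,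
    c.inner_j1_RF_left ht, c.inner_G_left, ← inner_sub_right, ← map_sub, c.RF_sub_RF ht₀ ht,
    map_smul, inner_smul_right]

lemma Gst_sub_Gst_apply {t₀ t : ℝ} (ht₀ : (t₀ : ℂ) ∈ c.res) (ht : (t : ℂ) ∈ c.res) (x : F) :
    c.Gst t x - c.Gst t₀ x = ((t₀ : ℂ) - t) • c.A (c.RF t (c.j1 (c.RF t₀ x))) := by
  rw [c.Gst_apply, c.Gst_apply, ← map_sub, c.RF_sub_RF ht ht₀, map_smul]

lemma norm_j1_RF_apply_le {t : ℝ} (ht : (t : ℂ) ∈ c.res) {S : H1 →ₗ[ℂ] F} (hS : c.IsSymmOp S)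
    {K : ℝ} (hK0 : 0 ≤ K) (hK : ∀ φ, ‖S φ‖ ≤ K * ‖φ‖) (ψ : H1) :
    ‖c.j1 (c.RF t (S ψ))‖ ≤ K * ‖c.RF t‖ * ‖c.j1 ψ‖ := by
  set v := c.j1 (c.RF t (S ψ))
  have hsq : ‖v‖ * ‖v‖ ≤ K * ‖c.RF t‖ * ‖c.j1 ψ‖ * ‖v‖ :=
    calc ‖v‖ * ‖v‖ = RCLike.re ⟪v, v⟫ := (inner_self_eq_norm_mul_norm _).symm
      _ = RCLike.re ⟪c.j1 ψ, S (c.RF t v)⟫ := by rw [c.inner_j1_RF_left ht, hS]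
      _ ≤ ‖c.j1 ψ‖ * ‖S (c.RF t v)‖ := (RCLike.re_le_norm _).trans (norm_inner_le_norm _ _)
      _ ≤ ‖c.j1 ψ‖ * (K * (‖c.RF t‖ * ‖v‖)) := by
        gcongr
        exact (hK _).trans (mul_le_mul_of_nonneg_left ((c.RF t).le_opNorm v) hK0)
      _ = K * ‖c.RF t‖ * ‖c.j1 ψ‖ * ‖v‖ := by ring
  rcases (norm_nonneg v).eq_or_lt with hv | hv
  · rw [← hv]
    positivity
  · exact le_of_mul_le_mul_right hsq hv

lemma exists_norm_Gst_sub_Gst_apply_le {t₀ t : ℝ} (ht₀ : (t₀ : ℂ) ∈ c.res)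
    (ht : (t : ℂ) ∈ c.res) {S : H1 →ₗ[ℂ] F} (hS : c.IsSymmOp S) {K : ℝ} (hK0 : 0 ≤ K)
    (hK : ∀ φ, ‖S φ‖ ≤ K * ‖φ‖) :
    ∃ C, 0 ≤ C ∧ ∀ ψ, ‖c.Gst t (S ψ) - c.Gst t₀ (S ψ)‖ ≤ C * ‖c.j1 ψ‖ := by
  refine ⟨‖(t₀ : ℂ) - t‖ * ‖c.A‖ * ‖c.RF t‖ * (K * ‖c.RF t₀‖), by positivity, fun ψ => ?_⟩
  rw [c.Gst_sub_Gst_apply ht₀ ht, norm_smul]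
  calc ‖(t₀ : ℂ) - t‖ * ‖c.A (c.RF t (c.j1 (c.RF t₀ (S ψ))))‖
      ≤ ‖(t₀ : ℂ) - t‖ * (‖c.A‖ * (‖c.RF t‖ * (K * ‖c.RF t₀‖ * ‖c.j1 ψ‖))) := by
        gcongr
        exact c.A.le_opNorm_of_le ((c.RF t).le_opNorm_of_le
          (c.norm_j1_RF_apply_le ht₀ hS hK0 hK ψ))
    _ = _ := by ring

lemma eq_smul_RF_G_of_j1_eq {t₀ t : ℝ} (ht₀ : (t₀ : ℂ) ∈ c.res) (ht : (t : ℂ) ∈ c.res)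
    {x : F} {ξ : H1} (hξ : c.j1 ξ = c.G t₀ x - c.G t x) :
    ξ = ((t : ℂ) - t₀) • c.RF t (c.G t₀ x) :=
  c.j1_inj (by rw [hξ, c.G_sub_G_apply ht₀ ht, map_smul])

lemma exists_norm_lift_G_sub_G_le {t₀ t : ℝ} (ht₀ : (t₀ : ℂ) ∈ c.res) (ht : (t : ℂ) ∈ c.res)
    (T : H1 →L[ℂ] F) (W : F →L[ℂ] F) :
    ∃ C, 0 ≤ C ∧ ∀ (ψ ξ : H1), c.j1 ξ = c.G t₀ (W (c.j1 ψ)) - c.G t (W (c.j1 ψ)) →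
      ‖T ξ‖ ≤ C * ‖c.j1 ψ‖ := by
  set L : F →L[ℂ] F := T.comp ((((t : ℂ) - t₀) • c.RF t).comp ((c.G t₀).comp W))
  refine ⟨‖L‖, norm_nonneg _, fun ψ ξ hξ => ?_⟩
  rw [c.eq_smul_RF_G_of_j1_eq ht₀ ht hξ]
  exact L.le_opNorm _

lemma eq_sub_of_j1_eq_sub_G {t₀ t : ℝ} {x : F} {ψ ξ χ₀ : H1} (hx : x - c.G t x = c.j1 ψ)
    (hξ : c.j1 ξ = c.G t₀ x - c.G t x) (hχ₀ : c.j1 χ₀ = x - c.G t₀ x) : χ₀ = ψ - ξ :=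
  c.j1_inj (by rw [map_sub, hχ₀, hξ, ← hx]; abel)

lemma map_add_sub_Gst_sub_eq {t₀ t : ℝ} {S : H1 →ₗ[ℂ] F} {Wst : F →L[ℂ] F}
    (hWst : ∀ y, Wst (y - c.Gst t y) = y) {ψ ξ χ₀ : H1} (hχ₀ : χ₀ = ψ - ξ) (x : F) :
    Wst (x + (S χ₀ - c.Gst t₀ (S χ₀))) - S ψ =
      Wst (x - S ξ + c.Gst t₀ (S ξ) + (c.Gst t (S ψ) - c.Gst t₀ (S ψ))) := by
  calc Wst (x + (S χ₀ - c.Gst t₀ (S χ₀))) - S ψ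
      = Wst (x + (S χ₀ - c.Gst t₀ (S χ₀))) - Wst (S ψ - c.Gst t (S ψ)) := by rw [hWst]
    _ = _ := by
      rw [← map_sub, hχ₀, map_sub S, map_sub (c.Gst t₀)]
      congr 1
      abel

end Ctx

theorem statement13_general (c : Ctx F H1 Hm1)
    (lam0 : ℝ) (hlam0 : lam0 < c.lamInf)
    (S : H1 →ₗ[ℂ] F) (hS : c.IsSymmOp S)
    (a b : ℝ) (hsmall : c.HSmall S a b)
    (lam : ℝ) (hlam : lam < c.lamInf)
    (W Wst : F →L[ℂ] F)
    (hW2 : ((1 : F →L[ℂ] F) - c.G (lam : ℂ)).comp W = 1)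
    (hWst1 : Wst.comp ((1 : F →L[ℂ] F) - c.Gst lam) = 1) :
    ∃ C : ℝ, 0 ≤ C ∧
      ∀ (ψ : H1) (ξ χ0 : H1),
        c.j1 ξ = c.G (lam0 : ℂ) (W (c.j1 ψ)) - c.G (lam : ℂ) (W (c.j1 ψ)) →
        c.j1 χ0 = W (c.j1 ψ) - c.G (lam0 : ℂ) (W (c.j1 ψ)) →
        ‖Wst (c.A ξ + (S χ0 - c.Gst lam0 (S χ0))) - S ψ‖ ≤ C * ‖c.j1 ψ‖ ∧
        ‖Wst (c.A ξ + (S χ0 - c.Gst lam0 (S χ0)))‖ ≤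
          a * ‖c.Hop ψ‖ + (b + C) * ‖c.j1 ψ‖ := by
  have hres0 := c.res_below lam0 hlam0
  have hres := c.res_below lam hlam
  have hK := hsmall.norm_apply_le
  have hW (y : F) : W y - c.G lam (W y) = y := by simpa using congr($hW2 y)
  have hWst (y : F) : Wst (y - c.Gst lam y) = y := by simpa using congr($hWst1 y)
  let Sc := S.mkContinuous _ hK
  obtain ⟨C₁, hC₁, hξ_part⟩ :=
    c.exists_norm_lift_G_sub_G_le hres0 hres (c.A - Sc + (c.Gst lam0).comp Sc) W
  obtain ⟨C₂, hC₂, hshift⟩ :=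
    c.exists_norm_Gst_sub_Gst_apply_le hres0 hres hS (by positivity) hK
  refine ⟨‖Wst‖ * (C₁ + C₂), by positivity, fun ψ ξ χ0 hξ hχ0 => ?_⟩
  have hdiff : ‖Wst (c.A ξ + (S χ0 - c.Gst lam0 (S χ0))) - S ψ‖ ≤
      ‖Wst‖ * (C₁ + C₂) * ‖c.j1 ψ‖ := by
    rw [c.map_add_sub_Gst_sub_eq hWst (c.eq_sub_of_j1_eq_sub_G (hW _) hξ hχ0)]
    calc _ ≤ ‖Wst‖ * (C₁ * ‖c.j1 ψ‖ + C₂ * ‖c.j1 ψ‖) :=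
          Wst.le_opNorm_of_le (norm_add_le_of_le (hξ_part ψ ξ hξ) (hshift ψ))
      _ = _ := by ring
  refine ⟨hdiff, ?_⟩
  linarith [norm_le_norm_add_norm_sub' (Wst (c.A ξ + (S χ0 - c.Gst lam0 (S χ0)))) (S ψ),
    hsmall ψ]

/-- Let `S` be `H`-small with constants `a ∈ [0,1)`, `b`, let
`A ∈ 𝔅(𝔥_s,𝔉)` for some `s ∈ (0,1)`, and let `λ < λ_inf` be such that `1-G_λ` and
`1-G_λ*` have bounded inverses `W`, `Wst` in `𝔅(𝔉)`.  Define
`S̃ := (1-G_λ*)⁻¹(A(G-G_λ) + T_S)(1-G_λ)⁻¹`.  Then `S̃ - S` extends to a bounded operator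
on `𝔉`; in particular `S̃` is `H`-small with the same constant `a`:
`‖S̃ψ‖ ≤ a‖Hψ‖ + b̃‖ψ‖` with `b̃ := b + ‖S̃-S‖`. -/
theorem statement13 (c : Ctx F H1 Hm1)
    (lam0 : ℝ) (hlam0 : lam0 < c.lamInf)
    (s : ℝ) (hs : s ∈ Set.Ioo (0 : ℝ) 1)
    (CA : ℝ) (hCA : 0 ≤ CA) (hA : ∀ ψ : H1, ‖c.A ψ‖ ≤ CA * c.ns s ψ)
    (S : H1 →ₗ[ℂ] F) (hS : c.IsSymmOp S)
    (a b : ℝ) (ha0 : 0 ≤ a) (ha1 : a < 1) (hsmall : c.HSmall S a b)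
    (lam : ℝ) (hlam : lam < c.lamInf)
    (W Wst : F →L[ℂ] F)
    (hW1 : W.comp ((1 : F →L[ℂ] F) - c.G (lam : ℂ)) = 1)
    (hW2 : ((1 : F →L[ℂ] F) - c.G (lam : ℂ)).comp W = 1)
    (hWst1 : Wst.comp ((1 : F →L[ℂ] F) - c.Gst lam) = 1)
    (hWst2 : ((1 : F →L[ℂ] F) - c.Gst lam).comp Wst = 1) :
    ∃ C : ℝ, 0 ≤ C ∧
      ∀ (ψ : H1) (ξ χ0 : H1),
        c.j1 ξ = c.G (lam0 : ℂ) (W (c.j1 ψ)) - c.G (lam : ℂ) (W (c.j1 ψ)) →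
        c.j1 χ0 = W (c.j1 ψ) - c.G (lam0 : ℂ) (W (c.j1 ψ)) →
        ‖Wst (c.A ξ + (S χ0 - c.Gst lam0 (S χ0))) - S ψ‖ ≤ C * ‖c.j1 ψ‖ ∧
        ‖Wst (c.A ξ + (S χ0 - c.Gst lam0 (S χ0)))‖ ≤
          a * ‖c.Hop ψ‖ + (b + C) * ‖c.j1 ψ‖ :=
  statement13_general c lam0 hlam0 S hS a b hsmall lam hlam W Wst hW2 hWst1
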